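/- arXiv:math/0404317 — 2 statements merged into one kernel-verified Lean document; each statement's English description precedes it below -/
import Mathlib

section
/- Let 𝒩 be a nest of orthogonal projections on a complex Hilbert space H and let u_1, …, u_k, v_1, …, v_k be vectors in H. Then the following are equivalent: (1) there exists X in the nest algebra Alg𝒩 with ‖X‖ ≤ 1 such that X u_i = v_i for all i; (2) for every projection N ∈ 𝒩, the k×k complex matrix (⟨N^⊥ v_i, N^⊥ v_j⟩)_{i,j} is dominated in the positive semidefinite order by the matrix (⟨N^⊥ u_i, N^⊥ u_j⟩)_{i,j}, where N^⊥ := I − N; that is, the difference (⟨N^⊥ u_i, N^⊥ u_j⟩ − ⟨N^⊥ v_i, N^⊥ v_j⟩)_{i,j} is positive semidefinite. -/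
/-!
For a finite chain, peel off its largest projection `N`. A contraction `d` of the corner
`(1 - N) H` sends `(1 - N) uᵢ` to `(1 - N) vᵢ`; its defect operator `S = (1 - d⋆d)^½` commutes
with every smaller projection, and the data `(S uᵢ, N vᵢ)` satisfy the hypothesis for the rest of
the chain: for `w = ∑ cᵢ uᵢ` and `z = ∑ cᵢ vᵢ` we have `d w = (1 - N) z`, so
`‖(1 - P) N z‖² = ‖(1 - P) z‖² - ‖(1 - N) z‖²` and `‖(1 - P) S w‖² = ‖(1 - P) w‖² - ‖d w‖²`. If `Z` solves that smaller problem, `X = N Z S + d`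
solves the original one, and `‖X x‖² = ‖N Z S x‖² + ‖d x‖² ≤ ‖S x‖² + ‖d x‖² = ‖x‖²`.
For an arbitrary nest, the unit ball is compact in the weak operator topology and the
constraints are closed there, so the solutions for the finite subchains have a common point.
Conversely `(1 - N) X = (1 - N) X (1 - N)` for `X` in the nest algebra. The matrix condition is the
Gram-matrix form of `‖∑ cᵢ (1 - N) vᵢ‖ ≤ ‖∑ cᵢ (1 - N) uᵢ‖`.
-/

open Filter Topology InnerProductSpace
open scoped ComplexOrder Matrix

section Contraction

variable {𝕜 E F V : Type*} [RCLike 𝕜] [NormedAddCommGroup E] [InnerProductSpace 𝕜 E]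
  [NormedAddCommGroup F] [NormedSpace 𝕜 F] [AddCommGroup V] [Module 𝕜 V] [FiniteDimensional 𝕜 V]

theorem exists_norm_le_one_apply_eq_of_norm_le (A : V →ₗ[𝕜] E) (B : V →ₗ[𝕜] F)
    (h : ∀ c, ‖B c‖ ≤ ‖A c‖) : ∃ d : E →L[𝕜] F, ‖d‖ ≤ 1 ∧ ∀ c, d (A c) = B c := by
  obtain ⟨σ, hσ⟩ := A.rangeRestrict.exists_rightInverse_of_surjective A.range_rangeRestrict
  have hAσ (y : LinearMap.range A) : A (σ y) = y := congr($(LinearMap.congr_fun hσ y).1)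
  have hker {c} (hc : A c = 0) : B c = 0 := norm_le_zero_iff.mp (by simpa [hc] using h c)
  let t : LinearMap.range A →L[𝕜] F := (B ∘ₗ σ).mkContinuous 1 fun y => by
    simpa [hAσ] using h (σ y)
  refine ⟨t ∘L (LinearMap.range A).orthogonalProjectionOnto, ?_, fun c => ?_⟩
  · calc _ ≤ ‖t‖ * ‖(LinearMap.range A).orthogonalProjectionOnto‖ := t.opNorm_comp_le _
      _ ≤ 1 * 1 := by
        gcongr
        · exact LinearMap.mkContinuous_norm_le _ zero_le_one _
        · exact Submodule.orthogonalProjectionOnto_norm_le _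
      _ = 1 := one_mul 1
  · have hproj : (LinearMap.range A).orthogonalProjectionOnto (A c) = ⟨A c, c, rfl⟩ :=
      Submodule.orthogonalProjectionOnto_mem_subspace_eq_self (⟨A c, c, rfl⟩ : LinearMap.range A)
    have hc : A (σ ⟨A c, c, rfl⟩ - c) = 0 := by simp [hAσ]
    simpa [t, hproj, sub_eq_zero] using hker hc

end Contraction

theorem Matrix.posSemidef_gram_sub_gram_iff {𝕜 E ι : Type*} [RCLike 𝕜] [NormedAddCommGroup E]
    [InnerProductSpace 𝕜 E] [Fintype ι] (a b : ι → E) :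
    (gram 𝕜 a - gram 𝕜 b).PosSemidef ↔ ∀ c : ι → 𝕜, ‖∑ i, c i • b i‖ ≤ ‖∑ i, c i • a i‖ := by
  have hquad (c : ι → 𝕜) : star c ⬝ᵥ (gram 𝕜 a - gram 𝕜 b) *ᵥ c =
      ((‖∑ i, c i • a i‖ ^ 2 - ‖∑ i, c i • b i‖ ^ 2 : ℝ) : 𝕜) := by
    rw [sub_mulVec, dotProduct_sub, star_dotProduct_gram_mulVec, star_dotProduct_gram_mulVec,
      inner_self_eq_norm_sq_to_K, inner_self_eq_norm_sq_to_K]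
    push_cast; rfl
  rw [posSemidef_iff_dotProduct_mulVec]
  simp only [(isHermitian_gram 𝕜 a).sub (isHermitian_gram 𝕜 b), true_and, hquad,
    RCLike.ofReal_nonneg, sub_nonneg]
  exact forall_congr' fun c => pow_le_pow_iff_left₀ (norm_nonneg _) (norm_nonneg _) two_ne_zero

section DefectOperator

variable {A : Type*} [CStarAlgebra A] [PartialOrder A] [StarOrderedRing A]

noncomputable def defectOperator (d : A) : A := CFC.sqrt (1 - star d * d)

theorem star_defectOperator_mul_self_add {d : A} (hd : ‖d‖ ≤ 1) :
    star (defectOperator d) * defectOperator d + star d * d = 1 := by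
  have hle : star d * d ≤ 1 :=
    calc star d * d ≤ algebraMap ℝ A (‖d‖ ^ 2) := CStarAlgebra.star_mul_le_algebraMap_norm_sq
      _ ≤ algebraMap ℝ A 1 := by gcongr; exact pow_le_one₀ (norm_nonneg d) hd
      _ = 1 := map_one _
  rw [defectOperator, (CFC.sqrt_nonneg _).isSelfAdjoint.star_eq,
    CFC.sqrt_mul_sqrt_self _ (sub_nonneg.mpr hle), sub_add_cancel]

theorem commute_defectOperator {d p : A} (hp : IsSelfAdjoint p) (hdp : d * p = 0) :
    Commute (defectOperator d) p := by
  have hpd : p * star d = 0 := by simpa [hp.star_eq] using congr(star $hdp)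
  have : Commute (1 - star d * d) p := by
    rw [commute_iff_eq, sub_mul, mul_sub, mul_assoc, hdp, ← mul_assoc, hpd]; simp
  rw [defectOperator, CFC.sqrt_eq_cfc]
  exact this.cfc_nnreal _

end DefectOperator

theorem mul_mul_add_mul_eq_mul_mul_add_mul_mul {R : Type*} [Ring R] {N Z S d P : R}
    (hPN : P * N = P) (hdP : d * P = 0) (hPd : P * d = 0) (hSP : Commute S P)
    (hZ : N * Z * P = P * Z * P) :
    (N * Z * S + d) * P = P * (N * Z * S + d) * P := by
  calc (N * Z * S + d) * P = N * Z * P * S := by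
        rw [add_mul, hdP, add_zero, mul_assoc, hSP.eq, ← mul_assoc]
    _ = P * N * Z * S * P := by
        rw [hZ, hPN, mul_assoc _ S, hSP.eq, ← mul_assoc]
    _ = P * (N * Z * S + d) * P := by
        rw [mul_add, add_mul, hPd, zero_mul, add_zero]; simp only [mul_assoc]

namespace ContinuousLinearMapWOT

variable {𝕜 H : Type*} [RCLike 𝕜] [NormedAddCommGroup H] [InnerProductSpace 𝕜 H]

theorem isCompact_setOf_norm_toCLM_le [CompleteSpace H] (r : ℝ) :
    IsCompact {A : H →WOT[𝕜] H | ‖A.toCLM‖ ≤ r} := by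
  rw [isCompact_iff_ultrafilter_le_nhds]
  intro 𝒰 h𝒰
  have hball : {A : H →WOT[𝕜] H | ‖A.toCLM‖ ≤ r} ∈ 𝒰 := le_principal_iff.mp h𝒰
  have hr : 0 ≤ r := by
    obtain ⟨A, hA⟩ := 𝒰.nonempty_of_mem hball
    exact (norm_nonneg _).trans hA
  have hbound (x y : H) : ∀ᶠ A in (𝒰 : Filter (H →WOT[𝕜] H)),
      ⟪A x, y⟫_𝕜 ∈ Metric.closedBall 0 (r * ‖x‖ * ‖y‖) := by
    filter_upwards [hball] with A hA
    rw [mem_closedBall_zero_iff]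
    calc ‖⟪A x, y⟫_𝕜‖ ≤ ‖A.toCLM x‖ * ‖y‖ := norm_inner_le_norm _ _
      _ ≤ r * ‖x‖ * ‖y‖ := by gcongr; exact A.toCLM.le_of_opNorm_le hA x
  have hlim (x y : H) : ∃ z, Tendsto (fun A : H →WOT[𝕜] H => ⟪A x, y⟫_𝕜) 𝒰 (𝓝 z) := by
    obtain ⟨z, -, hz⟩ := (isCompact_closedBall (0 : 𝕜) (r * ‖x‖ * ‖y‖)).ultrafilter_le_nhds
      (𝒰.map _) (tendsto_principal.mpr (hbound x y))
    exact ⟨z, hz⟩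
  choose L hL using hlim
  have hL_eq {x y z} (h : Tendsto (fun A : H →WOT[𝕜] H => ⟪A x, y⟫_𝕜) 𝒰 (𝓝 z)) : L x y = z :=
    tendsto_nhds_unique (hL x y) h
  let B : H →ₗ⋆[𝕜] H →ₗ[𝕜] 𝕜 := LinearMap.mk₂'ₛₗ (starRingEnd 𝕜) (RingHom.id 𝕜) L
    (fun x x' y => hL_eq <| ((hL x y).add (hL x' y)).congr fun A => by simp [inner_add_left])
    (fun c x y => hL_eq <| ((hL x y).const_mul _).congr fun A => by simp [inner_smul_left])
    (fun x y y' => hL_eq <| ((hL x y).add (hL x y')).congr fun A => by simp [inner_add_right])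
    (fun c x y => hL_eq <| ((hL x y).const_mul c).congr fun A => by simp [inner_smul_right])
  have hB (x y : H) : ‖B x y‖ ≤ r * ‖x‖ * ‖y‖ :=
    mem_closedBall_zero_iff.mp <| Metric.isClosed_closedBall.mem_of_tendsto (hL x y) (hbound x y)
  let T := continuousLinearMapOfBilin (B.mkContinuous₂ r hB)
  refine ⟨ofCLM T, ?_, ?_⟩
  · refine ContinuousLinearMap.opNorm_le_bound _ hr fun x => ?_
    calc ‖T x‖ = ‖B.mkContinuous₂ r hB x‖ := (toDual 𝕜 H).symm.norm_map _
      _ ≤ r * ‖x‖ := (B.mkContinuous₂ r hB).le_of_opNorm_le (B.mkContinuous₂_norm_le hr hB) x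
  · rw [le_nhds_iff_forall_inner_apply_le_nhds]
    intro x y
    have hT : ⟪y, ofCLM T x⟫_𝕜 = star (L x y) := by
      rw [← inner_conj_symm]
      exact congrArg star (continuousLinearMapOfBilin_apply _ x y)
    rw [hT]
    exact (hL x y).star.congr fun A => inner_conj_symm _ _

theorem isClosed_setOf_apply_eq [CompleteSpace H] (x z : H) :
    IsClosed {A : H →WOT[𝕜] H | A x = z} := by
  have : {A : H →WOT[𝕜] H | A x = z} = ⋂ y, {A | ⟪y, A x⟫_𝕜 = ⟪y, z⟫_𝕜} := by
    ext A
    simpa using ⟨fun h y => h ▸ rfl, ext_inner_left 𝕜⟩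
  rw [this]
  exact isClosed_iInter fun y => isClosed_eq (continuous_inner_apply continuous_id x y)
    continuous_const

theorem isClosed_setOf_mul_eq_mul_mul (N : H →WOT[𝕜] H) :
    IsClosed {A : H →WOT[𝕜] H | A * N = N * A * N} :=
  isClosed_eq (continuous_precomp N) ((continuous_precomp N).comp (continuous_postcomp N))

end ContinuousLinearMapWOT

section NestAlgebra

variable {H V : Type*} [NormedAddCommGroup H] [InnerProductSpace ℂ H] [CompleteSpace H]
  [AddCommGroup V] [Module ℂ V] [FiniteDimensional ℂ V]

theorem ContinuousLinearMap.norm_sq_add_norm_sq_of_star_mul_add_star_mul_eq_one {S T : H →L[ℂ] H}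
    (h : star S * S + star T * T = 1) (x : H) : ‖S x‖ ^ 2 + ‖T x‖ ^ 2 = ‖x‖ ^ 2 := by
  rw [apply_norm_sq_eq_inner_adjoint_left, apply_norm_sq_eq_inner_adjoint_left, ← map_add,
    ← inner_add_left, ← star_eq_adjoint, ← star_eq_adjoint, ← mul_def, ← mul_def, ← add_apply, h,
    one_apply_eq_self, inner_self_eq_norm_sq]

theorem IsStarProjection.norm_apply_sq_add_norm_one_sub_apply_sq {N : H →L[ℂ] H}
    (hN : IsStarProjection N) (x : H) : ‖N x‖ ^ 2 + ‖(1 - N) x‖ ^ 2 = ‖x‖ ^ 2 :=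
  ContinuousLinearMap.norm_sq_add_norm_sq_of_star_mul_add_star_mul_eq_one (by
    rw [hN.isSelfAdjoint.star_eq, hN.one_sub.isSelfAdjoint.star_eq, hN.isIdempotentElem.eq,
      hN.one_sub.isIdempotentElem.eq, add_sub_cancel]) x

theorem norm_one_sub_apply_le_of_defect {N P d S : H →L[ℂ] H} (hN : IsStarProjection N)
    (hP : IsStarProjection P) (hPN : P ≤ N) (hdP : d * P = 0) (hSP : Commute S P)
    (hSd : star S * S + star d * d = 1) {w z : H} (hdw : d w = (1 - N) z)
    (h : ‖(1 - P) z‖ ≤ ‖(1 - P) w‖) : ‖(1 - P) (N z)‖ ≤ ‖(1 - P) (S w)‖ := by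
  have hNP : N * P = P := (hP.le_iff_mul_eq_right hN).mp hPN
  have hPN' : P * N = P := (hP.le_iff_mul_eq_left hN).mp hPN
  have hz : ‖(1 - P) (N z)‖ ^ 2 + ‖(1 - N) z‖ ^ 2 = ‖(1 - P) z‖ ^ 2 := by
    have h1 : N ((1 - P) z) = (1 - P) (N z) := by
      simp only [sub_apply, one_apply_eq_self, map_sub]
      rw [← mul_apply_eq_comp, ← mul_apply_eq_comp, hNP, hPN']
    have h2 : (1 - N) ((1 - P) z) = (1 - N) z := by
      simp only [sub_apply, one_apply_eq_self, map_sub]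
      rw [← mul_apply_eq_comp, hNP]; abel
    rw [← h1, ← h2, hN.norm_apply_sq_add_norm_one_sub_apply_sq]
  have hw : ‖(1 - P) (S w)‖ ^ 2 + ‖(1 - N) z‖ ^ 2 = ‖(1 - P) w‖ ^ 2 := by
    have h1 : S ((1 - P) w) = (1 - P) (S w) := by
      simp only [sub_apply, one_apply_eq_self, map_sub]
      rw [← mul_apply_eq_comp, ← mul_apply_eq_comp, hSP.eq]
    have h2 : d ((1 - P) w) = (1 - N) z := by
      simp only [sub_apply, one_apply_eq_self, map_sub]
      rw [← mul_apply_eq_comp, hdP, hdw]; simp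
    rw [← h1, ← h2, ContinuousLinearMap.norm_sq_add_norm_sq_of_star_mul_add_star_mul_eq_one hSd]
  have hsq : ‖(1 - P) (N z)‖ ^ 2 ≤ ‖(1 - P) (S w)‖ ^ 2 := by
    nlinarith [pow_le_pow_left₀ (norm_nonneg _) h 2]
  exact (pow_le_pow_iff_left₀ (norm_nonneg _) (norm_nonneg _) two_ne_zero).mp hsq

theorem norm_mul_mul_add_le_one {N Z S d : H →L[ℂ] H} (hN : IsStarProjection N)
    (hNd : N * d = 0) (hZ : ‖Z‖ ≤ 1) (hSd : star S * S + star d * d = 1) :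
    ‖N * Z * S + d‖ ≤ 1 := by
  refine ContinuousLinearMap.opNorm_le_bound _ zero_le_one fun x => ?_
  have horth : ⟪N (Z (S x)), d x⟫_ℂ = 0 := by
    calc _ = ⟪Z (S x), (N * d) x⟫_ℂ := hN.isSelfAdjoint.isSymmetric _ _
      _ = 0 := by rw [hNd, zero_apply, inner_zero_right]
  have hNZ : ‖N (Z (S x))‖ ≤ ‖S x‖ :=
    calc ‖N (Z (S x))‖ ≤ ‖Z (S x)‖ := N.le_of_opNorm_le (hN.norm_le N) _ |>.trans_eq (one_mul _)
      _ ≤ ‖S x‖ := Z.le_of_opNorm_le hZ (S x) |>.trans_eq (one_mul _)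
  have hsq : ‖(N * Z * S + d) x‖ ^ 2 ≤ (1 * ‖x‖) ^ 2 := by
    rw [one_mul, ← ContinuousLinearMap.norm_sq_add_norm_sq_of_star_mul_add_star_mul_eq_one hSd x]
    simp only [add_apply, mul_apply_eq_comp]
    rw [sq, norm_add_sq_eq_norm_sq_add_norm_sq_of_inner_eq_zero _ _ horth, ← sq, ← sq]
    gcongr
  exact (pow_le_pow_iff_left₀ (norm_nonneg _) (by positivity) two_ne_zero).mp hsq

theorem IsStarProjection.exists_corner_contraction {N : H →L[ℂ] H} (hN : IsStarProjection N)
    (A B : V →ₗ[ℂ] H) (h : ∀ c, ‖(1 - N) (B c)‖ ≤ ‖(1 - N) (A c)‖) :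
    ∃ d : H →L[ℂ] H, ‖d‖ ≤ 1 ∧ d * N = 0 ∧ N * d = 0 ∧ ∀ c, d (A c) = (1 - N) (B c) := by
  obtain ⟨d, hd, hdA⟩ := exists_norm_le_one_apply_eq_of_norm_le
    ((1 - N : H →L[ℂ] H).toLinearMap ∘ₗ A) ((1 - N : H →L[ℂ] H).toLinearMap ∘ₗ B) h
  have hN₁ : (1 - N) * N = 0 := by rw [sub_mul, one_mul, hN.isIdempotentElem.eq, sub_self]
  have hN₂ : N * (1 - N) = 0 := by rw [mul_sub, mul_one, hN.isIdempotentElem.eq, sub_self]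
  refine ⟨(1 - N) * d * (1 - N), ?_, ?_, ?_, fun c => ?_⟩
  · calc _ ≤ ‖1 - N‖ * ‖d‖ * ‖1 - N‖ := norm_mul₃_le
      _ ≤ 1 * 1 * 1 := by gcongr <;> exact hN.one_sub.norm_le _
      _ = 1 := by norm_num
  · rw [mul_assoc, hN₁, mul_zero]
  · rw [← mul_assoc, ← mul_assoc, hN₂, zero_mul, zero_mul]
  · have hdA' : d ((1 - N) (A c)) = (1 - N) (B c) := hdA c
    rw [mul_apply_eq_comp, mul_apply_eq_comp, hdA', ← mul_apply_eq_comp,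
      hN.one_sub.isIdempotentElem.eq]

theorem norm_one_sub_apply_le_of_mul_eq {N X : H →L[ℂ] H} (hN : IsStarProjection N)
    (hX : ‖X‖ ≤ 1) (hXN : X * N = N * X * N) (x : H) : ‖(1 - N) (X x)‖ ≤ ‖(1 - N) x‖ := by
  have hXN' : (1 - N) * X * N = 0 := by rw [sub_mul, sub_mul, one_mul, hXN, sub_self]
  have hcompress : (1 - N) * X * (1 - N) = (1 - N) * X := by
    rw [mul_sub, mul_one, hXN', sub_zero]
  calc ‖(1 - N) (X x)‖ = ‖((1 - N) * X) ((1 - N) x)‖ := by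
        rw [← mul_apply_eq_comp ((1 - N) * X), hcompress]; rfl
    _ ≤ ‖(1 - N) * X‖ * ‖(1 - N) x‖ := ContinuousLinearMap.le_opNorm _ _
    _ ≤ 1 * ‖(1 - N) x‖ := by
        gcongr
        calc _ ≤ ‖1 - N‖ * ‖X‖ := norm_mul_le _ _
          _ ≤ 1 * 1 := by gcongr; exact hN.one_sub.norm_le _
          _ = 1 := one_mul 1
    _ = ‖(1 - N) x‖ := one_mul _

theorem exists_interpolant_insert {N : H →L[ℂ] H} (hN : IsStarProjection N)
    {F : Set (H →L[ℂ] H)} (hF : ∀ P ∈ F, IsStarProjection P ∧ P ≤ N)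
    (hsolve : ∀ A' B' : V →ₗ[ℂ] H,
      (∀ P ∈ insert 0 F, ∀ c, ‖(1 - P) (B' c)‖ ≤ ‖(1 - P) (A' c)‖) →
      ∃ Z : H →L[ℂ] H, ‖Z‖ ≤ 1 ∧ (∀ c, Z (A' c) = B' c) ∧ ∀ P ∈ F, Z * P = P * Z * P)
    (A B : V →ₗ[ℂ] H)
    (hdom : ∀ P ∈ insert 0 (insert N F), ∀ c, ‖(1 - P) (B c)‖ ≤ ‖(1 - P) (A c)‖) :
    ∃ X : H →L[ℂ] H, ‖X‖ ≤ 1 ∧ (∀ c, X (A c) = B c) ∧ ∀ P ∈ insert N F, X * P = P * X * P := by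
  obtain ⟨d, hd, hdN, hNd, hdA⟩ := hN.exists_corner_contraction A B (hdom N (by simp))
  set S := defectOperator d
  have hSd : star S * S + star d * d = 1 := star_defectOperator_mul_self_add hd
  have hbelow (P) (hP : P ∈ insert 0 (insert N F)) :
      IsStarProjection P ∧ P ≤ N ∧ d * P = 0 ∧ P * d = 0 ∧ Commute S P := by
    obtain ⟨hP, hPN⟩ : IsStarProjection P ∧ P ≤ N := by
      rcases hP with rfl | rfl | hP
      · exact ⟨.zero _, hN.nonneg⟩
      · exact ⟨hN, le_rfl⟩
      · exact hF P hP
    have hdP : d * P = 0 := by rw [← (hP.le_iff_mul_eq_right hN).mp hPN, ← mul_assoc, hdN, zero_mul]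
    have hPd : P * d = 0 := by rw [← (hP.le_iff_mul_eq_left hN).mp hPN, mul_assoc, hNd, mul_zero]
    exact ⟨hP, hPN, hdP, hPd, commute_defectOperator hP.isSelfAdjoint hdP⟩
  obtain ⟨Z, hZ, hZA, hZF⟩ := hsolve (S.toLinearMap ∘ₗ A) (N.toLinearMap ∘ₗ B) fun P hP c => by
    have hP' : P ∈ insert 0 (insert N F) := Set.insert_subset_insert (Set.subset_insert _ _) hP
    obtain ⟨hPproj, hPN, hdP, -, hSP⟩ := hbelow P hP'
    exact norm_one_sub_apply_le_of_defect hN hPproj hPN hdP hSP hSd (hdA c) (hdom P hP' c)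
  refine ⟨N * Z * S + d, norm_mul_mul_add_le_one hN hNd hZ hSd, fun c => ?_, fun P hP => ?_⟩
  · have hZSA : Z (S (A c)) = N (B c) := hZA c
    calc (N * Z * S + d) (A c) = N (N (B c)) + (1 - N) (B c) := by
          rw [add_apply, mul_apply_eq_comp, mul_apply_eq_comp, hZSA, hdA]
      _ = B c := by
          rw [← mul_apply_eq_comp N N, hN.isIdempotentElem.eq, sub_apply, one_apply_eq_self,
            add_sub_cancel]
  · obtain ⟨hPproj, hPN, hdP, hPd, hSP⟩ := hbelow P (Set.mem_insert_of_mem _ hP)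
    refine mul_mul_add_mul_eq_mul_mul_add_mul_mul ((hPproj.le_iff_mul_eq_left hN).mp hPN)
      hdP hPd hSP ?_
    rcases hP with rfl | hP
    · rfl
    · rw [mul_assoc N Z P, hZF P hP, ← mul_assoc, ← mul_assoc,
        (hPproj.le_iff_mul_eq_right hN).mp hPN]

theorem exists_interpolant_of_finset (F : Finset (H →L[ℂ] H)) (hF : ∀ P ∈ F, IsStarProjection P)
    (hchain : IsChain (· ≤ ·) (F : Set (H →L[ℂ] H))) (A B : V →ₗ[ℂ] H)
    (hdom : ∀ P ∈ insert 0 (F : Set (H →L[ℂ] H)), ∀ c, ‖(1 - P) (B c)‖ ≤ ‖(1 - P) (A c)‖) :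
    ∃ X : H →L[ℂ] H, ‖X‖ ≤ 1 ∧ (∀ c, X (A c) = B c) ∧ ∀ P ∈ F, X * P = P * X * P := by
  classical
  induction F using Finset.strongInduction generalizing A B with
  | H F ih =>
  rcases F.eq_empty_or_nonempty with rfl | hne
  · obtain ⟨d, hd, hdA⟩ := exists_norm_le_one_apply_eq_of_norm_le A B (by simpa using hdom 0)
    exact ⟨d, hd, hdA, by simp⟩
  obtain ⟨N, hNmax⟩ := F.exists_maximal hne
  have hNF : N ∈ F := hNmax.prop
  have hF' : (F : Set (H →L[ℂ] H)) = insert N (F.erase N : Set (H →L[ℂ] H)) := by simp [hNF]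
  have hle (P) (hP : P ∈ F) : P ≤ N := (hchain.total hP hNF).elim id (hNmax.le_of_ge hP)
  rw [hF'] at hdom
  obtain ⟨X, hX, hXA, hXF⟩ := exists_interpolant_insert (hF N hNF)
    (fun P hP => ⟨hF P (Finset.mem_of_mem_erase hP), hle P (Finset.mem_of_mem_erase hP)⟩)
    (fun A' B' => ih _ (F.erase_ssubset hNF) (fun P hP => hF P (Finset.mem_of_mem_erase hP))
      (hchain.mono (by simp)) A' B') A B hdom
  exact ⟨X, hX, hXA, fun P hP => hXF P (hF' ▸ hP)⟩

open ContinuousLinearMapWOT in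
theorem exists_interpolant_of_isChain (𝒩 : Set (H →L[ℂ] H)) (h𝒩 : ∀ P ∈ 𝒩, IsStarProjection P)
    (hchain : IsChain (· ≤ ·) 𝒩) (A B : V →ₗ[ℂ] H)
    (hdom : ∀ P ∈ insert 0 𝒩, ∀ c, ‖(1 - P) (B c)‖ ≤ ‖(1 - P) (A c)‖) :
    ∃ X : H →L[ℂ] H, ‖X‖ ≤ 1 ∧ (∀ c, X (A c) = B c) ∧ ∀ P ∈ 𝒩, X * P = P * X * P := by
  let K : Set (H →WOT[ℂ] H) := {X | ‖X.toCLM‖ ≤ 1} ∩ ⋂ c, {X | X (A c) = B c}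
  have hK : IsCompact K := (isCompact_setOf_norm_toCLM_le 1).inter_right
    (isClosed_iInter fun c => isClosed_setOf_apply_eq _ _)
  obtain ⟨X, ⟨hX, hXA⟩, hX𝒩⟩ := hK.inter_iInter_nonempty
    (fun P : 𝒩 => {X : H →WOT[ℂ] H | X * ofCLM P = ofCLM P * X * ofCLM P})
    (fun P => isClosed_setOf_mul_eq_mul_mul _) fun G => by
      let F := G.map (Function.Embedding.subtype (· ∈ 𝒩))
      have hF : (F : Set (H →L[ℂ] H)) ⊆ 𝒩 := by simp [F]
      obtain ⟨X, hX, hXA, hXF⟩ := exists_interpolant_of_finset F (fun P hP => h𝒩 P (hF hP))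
        (hchain.mono hF) A B fun P hP => hdom P (Set.insert_subset_insert hF hP)
      exact ⟨ofCLM X, ⟨hX, Set.mem_iInter.mpr hXA⟩,
        Set.mem_iInter₂.mpr fun P hP => congrArg ofCLM (hXF P (by simpa [F] using hP))⟩
  exact ⟨X.toCLM, hX, Set.mem_iInter.mp hXA,
    fun P hP => congrArg toCLM (Set.mem_iInter.mp hX𝒩 ⟨P, hP⟩)⟩

end NestAlgebra

theorem nest_algebra_vector_interpolation_general
    {H : Type*} [NormedAddCommGroup H] [InnerProductSpace ℂ H] [CompleteSpace H]
    (𝒩 : Set (H →L[ℂ] H))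
    (hproj : ∀ N ∈ 𝒩, IsSelfAdjoint N ∧ N * N = N)
    (hchain : ∀ N ∈ 𝒩, ∀ M ∈ 𝒩, (M - N).IsPositive ∨ (N - M).IsPositive)
    (h0 : (0 : H →L[ℂ] H) ∈ 𝒩)
    {k : ℕ} (u v : Fin k → H) :
    (∃ X : H →L[ℂ] H, (∀ N ∈ 𝒩, X * N = N * X * N) ∧ ‖X‖ ≤ 1 ∧ ∀ i, X (u i) = v i) ↔
      ∀ N ∈ 𝒩, (Matrix.of fun i j : Fin k =>
        (inner ℂ ((1 - N) (u i)) ((1 - N) (u j)) : ℂ) -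
          (inner ℂ ((1 - N) (v i)) ((1 - N) (v j)) : ℂ)).PosSemidef := by
  have h𝒩 (N) (hN : N ∈ 𝒩) : IsStarProjection N := ⟨(hproj N hN).2, (hproj N hN).1⟩
  set A := Fintype.linearCombination ℂ u
  set B := Fintype.linearCombination ℂ v
  have hgram (N : H →L[ℂ] H) : (Matrix.of fun i j : Fin k =>
      (inner ℂ ((1 - N) (u i)) ((1 - N) (u j)) : ℂ) -
        (inner ℂ ((1 - N) (v i)) ((1 - N) (v j)) : ℂ)).PosSemidef ↔
      ∀ c, ‖(1 - N) (B c)‖ ≤ ‖(1 - N) (A c)‖ := by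
    change (Matrix.gram ℂ (⇑(1 - N) ∘ u) - Matrix.gram ℂ (⇑(1 - N) ∘ v)).PosSemidef ↔ _
    simp only [Matrix.posSemidef_gram_sub_gram_iff, A, B, Fintype.linearCombination_apply,
      map_sum, map_smul, Function.comp_apply]
  constructor
  · rintro ⟨X, hX𝒩, hX, hXu⟩ N hN
    rw [hgram]
    intro c
    have hXA : X (A c) = B c := by simp [A, B, Fintype.linearCombination_apply, hXu]
    simpa [hXA] using norm_one_sub_apply_le_of_mul_eq (h𝒩 N hN) hX (hX𝒩 N hN) (A c)
  · intro h
    obtain ⟨X, hX, hXA, hX𝒩⟩ := exists_interpolant_of_isChain 𝒩 h𝒩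
      (fun N hN M hM _ => by
        simpa only [ContinuousLinearMap.le_def, or_comm] using hchain N hN M hM)
      A B fun P hP => (hgram P).mp (h P (Set.insert_eq_of_mem h0 ▸ hP))
    exact ⟨X, hX𝒩, hX, fun i => by simpa [A, B] using hXA (Pi.single i 1)⟩

/-- **Nest algebra interpolation (vector version).** Let `𝒩` be a nest of orthogonal
projections on `H` and `u i, v i ∈ H`. There is `X` in the nest algebra `Alg 𝒩` with
`‖X‖ ≤ 1` and `X (u i) = v i` for all `i` iff for every `N ∈ 𝒩` the matrix
`(⟪N^⊥ u i, N^⊥ u j⟫ - ⟪N^⊥ v i, N^⊥ v j⟫)` is positive semidefinite, where `N^⊥ = I - N`. -/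
theorem nest_algebra_vector_interpolation
    {H : Type*} [NormedAddCommGroup H] [InnerProductSpace ℂ H] [CompleteSpace H]
    (𝒩 : Set (H →L[ℂ] H))
    (hproj : ∀ N ∈ 𝒩, IsSelfAdjoint N ∧ N * N = N)
    (hchain : ∀ N ∈ 𝒩, ∀ M ∈ 𝒩, (M - N).IsPositive ∨ (N - M).IsPositive)
    (h0 : (0 : H →L[ℂ] H) ∈ 𝒩) (h1 : (1 : H →L[ℂ] H) ∈ 𝒩)
    (hclosed : IsClosed ((fun N : H →L[ℂ] H => (N : H → H)) '' 𝒩))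
    {k : ℕ} (u v : Fin k → H) :
    (∃ X : H →L[ℂ] H, (∀ N ∈ 𝒩, X * N = N * X * N) ∧ ‖X‖ ≤ 1 ∧ ∀ i, X (u i) = v i) ↔
      ∀ N ∈ 𝒩, (Matrix.of fun i j : Fin k =>
        (inner ℂ ((1 - N) (u i)) ((1 - N) (u j)) : ℂ) -
          (inner ℂ ((1 - N) (v i)) ((1 - N) (v j)) : ℂ)).PosSemidef :=
  nest_algebra_vector_interpolation_general 𝒩 hproj hchain h0 u v
end

section
/- Let ℰ and H be complex Hilbert spaces and let A : ℰ → ℰ, B : H → ℰ, C : ℰ → H, D : H → H be bounded operators such that the block operator V = [[A, B], [C, D]] : ℰ ⊕ H → ℰ ⊕ H is a coisometry (V V* = I). Then for every z in the open unit disc 𝔻, the operator I − z D is invertible, the function Z(z) := A + z B (I − z D)^{-1} C is holomorphic on 𝔻, and ‖Z(z)‖ ≤ 1 for all z ∈ 𝔻. -/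
open ContinuousLinearMap

/-! A coisometry has norm at most one (C*-identity), so the colligation `V` is a contraction; in
particular `‖D‖ ≤ 1`, which makes `1 - z D` invertible on the disc, and `Z` is holomorphic there
as a composition with the holomorphic resolvent. For the norm bound, put `g = (1 - z D)⁻¹ C x`:
then `V (x, z g) = (Z(z) x, g)`, so `‖Z(z) x‖² + ‖g‖² ≤ ‖x‖² + |z|² ‖g‖² ≤ ‖x‖² + ‖g‖²`. -/

theorem CStarRing.norm_le_one_of_mul_star_eq_one {R : Type*} [NormedRing R] [StarRing R]
    [CStarRing R] {x : R} (hx : x * star x = 1) : ‖x‖ ≤ 1 := by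
  have h_one : ‖(1 : R)‖ * ‖(1 : R)‖ = ‖(1 : R)‖ := by
    simpa using (CStarRing.norm_self_mul_star (x := (1 : R))).symm
  have h_x : ‖x‖ * ‖x‖ = ‖(1 : R)‖ := by rw [← CStarRing.norm_self_mul_star, hx]
  have h_one_le : ‖(1 : R)‖ ≤ 1 := by nlinarith [norm_nonneg (1 : R)]
  nlinarith [norm_nonneg x]

theorem isUnit_one_sub_smul_of_norm_lt_one {𝕜 R : Type*} [NormedField 𝕜] [NormedRing R]
    [NormedSpace 𝕜 R] [HasSummableGeomSeries R] {D : R} (hD : ‖D‖ ≤ 1) {z : 𝕜} (hz : ‖z‖ < 1) :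
    IsUnit (1 - z • D) :=
  isUnit_one_sub_of_norm_lt_one <| calc
    ‖z • D‖ ≤ ‖z‖ * ‖D‖ := norm_smul_le z D
    _ ≤ ‖z‖ * 1 := by gcongr
    _ < 1 := by rwa [mul_one]

section Colligation

variable {𝕜 E F : Type*} [NontriviallyNormedField 𝕜]
  [NormedAddCommGroup E] [NormedSpace 𝕜 E] [NormedAddCommGroup F] [NormedSpace 𝕜 F]
  (A : E →L[𝕜] E) (B : F →L[𝕜] E) (C : E →L[𝕜] F) (D : F →L[𝕜] F)

noncomputable def transferFunction (z : 𝕜) : E →L[𝕜] E :=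
  A + z • (B ∘L Ring.inverse (1 - z • D) ∘L C)

/-- The block operator `[[A, B], [C, D]]` is a contraction of `E × F` with the `L²` norm. -/
def IsContractiveColligation : Prop :=
  ∀ e h, ‖A e + B h‖ ^ 2 + ‖C e + D h‖ ^ 2 ≤ ‖e‖ ^ 2 + ‖h‖ ^ 2

variable {A B C D}

theorem isContractiveColligation_of_norm_le_one (V : WithLp 2 (E × F) →L[𝕜] WithLp 2 (E × F))
    (hV : ∀ e h, V ((WithLp.equiv 2 (E × F)).symm (e, h)) =
      (WithLp.equiv 2 (E × F)).symm (A e + B h, C e + D h))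
    (hV_le : ‖V‖ ≤ 1) : IsContractiveColligation A B C D := by
  simp only [WithLp.equiv_symm_apply] at hV
  intro e h
  have hVw := V.le_of_opNorm_le hV_le (WithLp.toLp 2 (e, h))
  rw [one_mul] at hVw
  have := pow_le_pow_left₀ (norm_nonneg _) hVw 2
  simpa [hV, WithLp.prod_norm_sq_eq_of_L2] using this

theorem IsContractiveColligation.norm_D_le_one (hV : IsContractiveColligation A B C D) :
    ‖D‖ ≤ 1 := by
  refine opNorm_le_bound _ zero_le_one fun h => ?_
  have := hV 0 h
  simp only [map_zero, zero_add, norm_zero] at this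
  rw [one_mul]
  exact pow_le_pow_iff_left₀ (norm_nonneg _) (norm_nonneg _) two_ne_zero |>.mp
    (by nlinarith [sq_nonneg ‖B h‖])

theorem differentiableOn_transferFunction [CompleteSpace F] {S : Set 𝕜}
    (hS : ∀ z ∈ S, IsUnit (1 - z • D)) : DifferentiableOn 𝕜 (transferFunction A B C D) S := by
  have h_resolvent : DifferentiableOn 𝕜 (fun z : 𝕜 => Ring.inverse (1 - z • D)) S := fun z hz =>
    ((differentiable_id.smul_const D).const_sub 1 z).differentiableWithinAt.inverse (hS z hz)
  exact (differentiableOn_id.smul <| (differentiableOn_const B).clm_comp <|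
    h_resolvent.clm_comp (differentiableOn_const C)).const_add A

theorem IsContractiveColligation.norm_transferFunction_le_one
    (hV : IsContractiveColligation A B C D) {z : 𝕜} (hz : ‖z‖ ≤ 1) (hunit : IsUnit (1 - z • D)) :
    ‖transferFunction A B C D z‖ ≤ 1 := by
  refine opNorm_le_bound _ zero_le_one fun x => ?_
  set g := Ring.inverse (1 - z • D) (C x)
  have hg : C x + D (z • g) = g := by
    have := congr($(Ring.mul_inverse_cancel _ hunit) (C x))
    simp only [mul_apply_eq_comp, sub_apply, one_apply_eq_self, smul_apply,
      sub_eq_iff_eq_add] at this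
    rw [map_smul]
    exact this.symm
  have hZ : transferFunction A B C D z x = A x + B (z • g) := by
    simp [transferFunction, g]
  have h_contr := hV x (z • g)
  rw [hg, ← hZ] at h_contr
  have h_zg : ‖z • g‖ ≤ ‖g‖ := by
    rw [norm_smul]; exact mul_le_of_le_one_left (norm_nonneg g) hz
  rw [one_mul]
  exact pow_le_pow_iff_left₀ (norm_nonneg _) (norm_nonneg _) two_ne_zero |>.mp
    (by nlinarith [pow_le_pow_left₀ (norm_nonneg _) h_zg 2])

end Colligation

/-- **Transfer functions of coisometric colligations are Schur class.** If the block operator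
`V = [[A, B], [C, D]] : ℰ ⊕ H → ℰ ⊕ H` is a coisometry, then for every `z ∈ 𝔻` the operator
`I - z D` is invertible, the transfer function `Z(z) = A + z B (I - z D)⁻¹ C` is holomorphic
on `𝔻`, and `‖Z(z)‖ ≤ 1` on `𝔻`. -/
theorem transfer_function_of_coisometry
    {E : Type*} [NormedAddCommGroup E] [InnerProductSpace ℂ E] [CompleteSpace E]
    {Hs : Type*} [NormedAddCommGroup Hs] [InnerProductSpace ℂ Hs] [CompleteSpace Hs]
    (A : E →L[ℂ] E) (B : Hs →L[ℂ] E) (C : E →L[ℂ] Hs) (D : Hs →L[ℂ] Hs)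
    (V : WithLp 2 (E × Hs) →L[ℂ] WithLp 2 (E × Hs))
    (hV : ∀ (e : E) (h : Hs),
        V ((WithLp.equiv 2 (E × Hs)).symm (e, h)) =
          (WithLp.equiv 2 (E × Hs)).symm (A e + B h, C e + D h))
    (hco : V ∘L adjoint V = 1) :
    (∀ z ∈ Metric.ball (0 : ℂ) 1, IsUnit (1 - z • D)) ∧
    DifferentiableOn ℂ
      (fun z : ℂ => A + z • (B ∘L Ring.inverse (1 - z • D) ∘L C)) (Metric.ball 0 1) ∧
    ∀ z ∈ Metric.ball (0 : ℂ) 1,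
      ‖A + z • (B ∘L Ring.inverse (1 - z • D) ∘L C)‖ ≤ 1 := by
  have h_contr : IsContractiveColligation A B C D :=
    isContractiveColligation_of_norm_le_one V hV <|
      CStarRing.norm_le_one_of_mul_star_eq_one (by rwa [star_eq_adjoint])
  have h_unit : ∀ z ∈ Metric.ball (0 : ℂ) 1, IsUnit (1 - z • D) := fun z hz =>
    isUnit_one_sub_smul_of_norm_lt_one h_contr.norm_D_le_one (mem_ball_zero_iff.mp hz)
  exact ⟨h_unit, differentiableOn_transferFunction h_unit, fun z hz =>
    h_contr.norm_transferFunction_le_one (mem_ball_zero_iff.mp hz).le (h_unit z hz)⟩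
end
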